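/- arXiv:1505.07651 — 5 statements merged into one kernel-verified Lean document; each statement's English description precedes it below -/
import Mathlib

section
/- Let $h,n$ be integers with $3 \le h \le n-1$ and let $f(x)=x^{3}+(h+4-2n)x^{2}+(5-2h-2nh+2h^{2}-n)x-nh+h^{2}-2h+2$. Then $f(0)<0$, $f(-1/2)<0$, $f(-1)>0$, and $f(-2)>0$. -/
theorem stmt_0 (h n : ℤ) (h3 : 3 ≤ h) (hn : h ≤ n - 1) (f : ℝ → ℝ)
    (hf : ∀ x : ℝ, f x = x ^ 3 + ((h : ℝ) + 4 - 2 * n) * x ^ 2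
      + (5 - 2 * h - 2 * n * h + 2 * h ^ 2 - n) * x - n * h + h ^ 2 - 2 * h + 2) :
    f 0 < 0 ∧ f (-1 / 2) < 0 ∧ f (-1) > 0 ∧ f (-2) > 0 := by
  have hh : (3 : ℝ) ≤ (h : ℝ) := by exact_mod_cast h3
  have hnn : (h : ℝ) + 1 ≤ (n : ℝ) := by
    have : h + 1 ≤ n := by omega
    exact_mod_cast this
  refine ⟨?_, ?_, ?_, ?_⟩ <;> rw [hf] <;> nlinarith [mul_nonneg (sub_nonneg.2 hnn) (by linarith : (0:ℝ) ≤ (h:ℝ) - 2), sq_nonneg ((h:ℝ) - (n:ℝ))]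
end

section
/- Let $h,n$ be integers with $3 \le h \le n-1$ and let $f(x)=x^{3}+(h+4-2n)x^{2}+(5-2h-2nh+2h^{2}-n)x-nh+h^{2}-2h+2$. Then $f$ has exactly one real root in each of the intervals $(0,+\infty)$, $(-1,-1/2)$, and $(-\infty,-2)$. -/
lemma cubic_card_le (a b c : ℝ) (s : Finset ℝ)
    (hs : ∀ x ∈ s, x^3 + a*x^2 + b*x + c = 0) : s.card ≤ 3 := by
  set P : Polynomial ℝ := Polynomial.X^3 + Polynomial.C a * Polynomial.X^2
    + Polynomial.C b * Polynomial.X + Polynomial.C c with hPdef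
  have hmon : P.Monic := by unfold P; monicity!
  have hne : P ≠ 0 := hmon.ne_zero
  have hdeg : P.natDegree ≤ 3 := by unfold P; compute_degree
  have hsub : s ⊆ P.roots.toFinset := by
    intro x hx
    rw [Multiset.mem_toFinset, Polynomial.mem_roots hne]
    have := hs x hx
    simp [Polynomial.IsRoot, hPdef]
    linarith
  calc s.card ≤ P.roots.toFinset.card := Finset.card_le_card hsub
    _ ≤ Multiset.card P.roots := P.roots.toFinset_card_le
    _ ≤ P.natDegree := P.card_roots'
    _ ≤ 3 := hdeg

lemma four_roots (a b c x y z w : ℝ) (hxy : x ≠ y) (hxz : x ≠ z) (hxw : x ≠ w)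
    (hyz : y ≠ z) (hyw : y ≠ w) (hzw : z ≠ w)
    (h1 : x^3 + a*x^2 + b*x + c = 0) (h2 : y^3 + a*y^2 + b*y + c = 0)
    (h3 : z^3 + a*z^2 + b*z + c = 0) (h4 : w^3 + a*w^2 + b*w + c = 0) : False := by
  have hcard : ({x, y, z, w} : Finset ℝ).card = 4 := by
    rw [Finset.card_insert_of_notMem (by simp [hxy, hxz, hxw]),
      Finset.card_insert_of_notMem (by simp [hyz, hyw]),
      Finset.card_insert_of_notMem (by simp [hzw]), Finset.card_singleton]
  have := cubic_card_le a b c {x, y, z, w} (by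
    intro t ht
    simp only [Finset.mem_insert, Finset.mem_singleton] at ht
    rcases ht with rfl | rfl | rfl | rfl <;> assumption)
  omega

set_option maxHeartbeats 1000000 in
theorem stmt_1 (h n : ℤ) (h3 : 3 ≤ h) (hn : h ≤ n - 1) (f : ℝ → ℝ)
    (hf : ∀ x : ℝ, f x = x ^ 3 + ((h : ℝ) + 4 - 2 * n) * x ^ 2
      + (5 - 2 * h - 2 * n * h + 2 * h ^ 2 - n) * x - n * h + h ^ 2 - 2 * h + 2) :
    (∃! x : ℝ, x ∈ Set.Ioi (0 : ℝ) ∧ f x = 0) ∧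
    (∃! x : ℝ, x ∈ Set.Ioo (-1 : ℝ) (-1 / 2) ∧ f x = 0) ∧
    (∃! x : ℝ, x ∈ Set.Iio (-2 : ℝ) ∧ f x = 0) := by
  set a : ℝ := (h : ℝ) + 4 - 2 * n with ha
  set b : ℝ := 5 - 2 * (h:ℝ) - 2 * n * h + 2 * (h:ℝ) ^ 2 - n with hb
  set c : ℝ := -(n:ℝ) * h + (h:ℝ) ^ 2 - 2 * h + 2 with hc
  have hf' : ∀ x : ℝ, f x = x^3 + a*x^2 + b*x + c := by
    intro x; rw [hf x]; ring
  have hh : (3 : ℝ) ≤ (h : ℝ) := by exact_mod_cast h3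
  have hnh : (h : ℝ) + 1 ≤ (n : ℝ) := by
    have : h + 1 ≤ n := by omega
    exact_mod_cast this
  have hcont : Continuous f := by
    have : f = fun x => x^3 + a*x^2 + b*x + c := funext hf'
    rw [this]; continuity
  -- sign facts
  have hf0 : f 0 < 0 := by
    rw [hf']; nlinarith [mul_le_mul_of_nonneg_right hnh (by linarith : (0:ℝ) ≤ (h:ℝ))]
  have hfm1 : 0 < f (-1) := by
    rw [hf']
    nlinarith [mul_pos (by linarith : (0:ℝ) < (n:ℝ) - h) (by linarith : (0:ℝ) < (h:ℝ) - 1)]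
  have hfmhalf : f (-1/2) < 0 := by
    rw [hf']; nlinarith
  have hfm2 : 0 < f (-2) := by
    rw [hf']
    nlinarith [mul_pos (by linarith : (0:ℝ) < (n:ℝ) - h) (by linarith : (0:ℝ) < (h:ℝ) - 2)]
  set M : ℝ := 3 + |a| + |b| + |c| with hM
  have hMa : 0 ≤ |a| := abs_nonneg a
  have hMb : 0 ≤ |b| := abs_nonneg b
  have hMc : 0 ≤ |c| := abs_nonneg c
  have hM3 : 3 ≤ M := by simp [hM]; linarith
  have hMM : M ≤ M^2 := by nlinarith
  have hM1 : (1:ℝ) ≤ M^2 := by nlinarith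
  have hMpos : (0:ℝ) < M^2 := by positivity
  have hfM : 0 < f M := by
    rw [hf']
    have h1 : -|a| *M^2 ≤ a*M^2 := mul_le_mul_of_nonneg_right (neg_abs_le a) (sq_nonneg M)
    have h2 : -|b| *M^2 ≤ b*M := by
      have t1 : -|b| *M ≤ b*M := mul_le_mul_of_nonneg_right (neg_abs_le b) (by linarith)
      have t2 : |b| *M ≤ |b| *M^2 := mul_le_mul_of_nonneg_left hMM hMb
      linarith
    have h3 : -|c| *M^2 ≤ c := by
      have t1 : -|c| ≤ c := neg_abs_le c
      have t2 : |c| ≤ |c| *M^2 := le_mul_of_one_le_right hMc hM1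
      linarith
    have e : M^3 + (-|a|)*M^2 + (-|b|)*M^2 + (-|c|)*M^2 = 3*M^2 := by rw [hM]; ring
    nlinarith
  have hfmM : f (-M) < 0 := by
    rw [hf']
    have h1 : a*M^2 ≤ |a| *M^2 := mul_le_mul_of_nonneg_right (le_abs_self a) (sq_nonneg M)
    have h2 : -(b*M) ≤ |b| *M^2 := by
      have t1 : -(b*M) = (-b)*M := by ring
      have t2 : (-b)*M ≤ |b| *M := mul_le_mul_of_nonneg_right (neg_le_abs b) (by linarith)
      have t3 : |b| *M ≤ |b| *M^2 := mul_le_mul_of_nonneg_left hMM hMb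
      linarith
    have h3 : c ≤ |c| *M^2 := by
      have t1 : c ≤ |c| := le_abs_self c
      have t2 : |c| ≤ |c| *M^2 := le_mul_of_one_le_right hMc hM1
      linarith
    have e : -(M^3) + |a| *M^2 + |b| *M^2 + |c| *M^2 = -(3*M^2) := by rw [hM]; ring
    have expand : (-M)^3 + a*(-M)^2 + b*(-M) + c = -(M^3) + a*M^2 - (b*M) + c := by ring
    linarith
  -- existence via IVT
  have ex1 : ∃ x ∈ Set.Ioo (0:ℝ) M, f x = 0 := by
    have := intermediate_value_Ioo (by linarith : (0:ℝ) ≤ M) hcont.continuousOn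
    obtain ⟨x, hx, hx0⟩ := this (Set.mem_Ioo.mpr ⟨hf0, hfM⟩)
    exact ⟨x, hx, hx0⟩
  have ex2 : ∃ x ∈ Set.Ioo (-1:ℝ) (-1/2), f x = 0 := by
    have := intermediate_value_Ioo' (by linarith : (-1:ℝ) ≤ -1/2) hcont.continuousOn
    obtain ⟨x, hx, hx0⟩ := this (Set.mem_Ioo.mpr ⟨hfmhalf, hfm1⟩)
    exact ⟨x, hx, hx0⟩
  have ex3 : ∃ x ∈ Set.Ioo (-M) (-2:ℝ), f x = 0 := by
    have := intermediate_value_Ioo (by linarith : (-M:ℝ) ≤ -2) hcont.continuousOn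
    obtain ⟨x, hx, hx0⟩ := this (Set.mem_Ioo.mpr ⟨hfmM, hfm2⟩)
    exact ⟨x, hx, hx0⟩
  obtain ⟨r1, hr1, hr1z⟩ := ex1
  obtain ⟨r2, hr2, hr2z⟩ := ex2
  obtain ⟨r3, hr3, hr3z⟩ := ex3
  have root : ∀ x : ℝ, f x = 0 → x^3 + a*x^2 + b*x + c = 0 := by
    intro x hx; rw [← hf' x]; exact hx
  obtain ⟨hr1a, hr1b⟩ := hr1
  obtain ⟨hr2a, hr2b⟩ := hr2
  obtain ⟨hr3a, hr3b⟩ := hr3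
  refine ⟨⟨r1, ⟨hr1a, hr1z⟩, ?_⟩, ⟨r2, ⟨⟨hr2a, hr2b⟩, hr2z⟩, ?_⟩, ⟨r3, ⟨by exact hr3b, hr3z⟩, ?_⟩⟩
  · rintro y ⟨hy, hyz⟩
    by_contra hne
    simp only [Set.mem_Ioi] at hy
    exact four_roots a b c y r1 r2 r3 hne (by linarith) (by linarith)
      (by linarith) (by linarith) (by linarith)
      (root y hyz) (root r1 hr1z) (root r2 hr2z) (root r3 hr3z)
  · rintro y ⟨hy, hyz⟩
    by_contra hne
    simp only [Set.mem_Ioo] at hy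
    exact four_roots a b c y r2 r1 r3 hne (by linarith [hy.1, hy.2]) (by linarith [hy.1])
      (by linarith) (by linarith) (by linarith)
      (root y hyz) (root r2 hr2z) (root r1 hr1z) (root r3 hr3z)
  · rintro y ⟨hy, hyz⟩
    by_contra hne
    simp only [Set.mem_Iio] at hy
    exact four_roots a b c y r3 r1 r2 hne (by linarith) (by linarith [hr2a])
      (by linarith) (by linarith) (by linarith [hr2a])
      (root y hyz) (root r3 hr3z) (root r1 hr1z) (root r2 hr2z)
end

section
/- Let $s,t$ be integers with $s \ge 2$, $t \ge 2$, and let $f(x)=x^{4}+(-s-t+4)x^{3}+(2t+2s-8st+4)x^{2}+(6s+6t-14st)x-5st+2s+2t$. Then $f(0)<0$, $f(-1/2)<0$, $f(-1)>0$, and $f(-2)<0$. -/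
theorem stmt_3 (s t : ℤ) (hs : 2 ≤ s) (ht : 2 ≤ t) (f : ℝ → ℝ)
    (hf : ∀ x : ℝ, f x = x ^ 4 + (-(s : ℝ) - t + 4) * x ^ 3
      + (2 * t + 2 * s - 8 * s * t + 4) * x ^ 2 + (6 * s + 6 * t - 14 * s * t) * x
      - 5 * s * t + 2 * s + 2 * t) :
    f 0 < 0 ∧ f (-1 / 2) < 0 ∧ f (-1) > 0 ∧ f (-2) < 0 := by
  have hs' : (2 : ℝ) ≤ (s : ℝ) := by exact_mod_cast hs
  have ht' : (2 : ℝ) ≤ (t : ℝ) := by exact_mod_cast ht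
  refine ⟨?_, ?_, ?_, ?_⟩ <;> rw [hf] <;> nlinarith [mul_le_mul hs' ht' (by linarith) (by linarith : (0:ℝ) ≤ (s:ℝ))]
end

section
/- Let $s,t$ be integers with $s \ge 2$, $t \ge 2$, and let $f(x)=x^{4}+(-s-t+4)x^{3}+(2t+2s-8st+4)x^{2}+(6s+6t-14st)x-5st+2s+2t$. Then $f$ has a real root in each of the intervals $(0,+\infty)$, $(-1,-1/2)$, $(-2,-1)$, and $(-\infty,-2)$, and exactly one root in each. -/
open Polynomial in
lemma five_roots_aux (a b c d x₁ x₂ x₃ x₄ x₅ : ℝ)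
    (h12 : x₁ ≠ x₂) (h13 : x₁ ≠ x₃) (h14 : x₁ ≠ x₄) (h15 : x₁ ≠ x₅)
    (h23 : x₂ ≠ x₃) (h24 : x₂ ≠ x₄) (h25 : x₂ ≠ x₅)
    (h34 : x₃ ≠ x₄) (h35 : x₃ ≠ x₅) (h45 : x₄ ≠ x₅)
    (e1 : x₁^4 + a*x₁^3 + b*x₁^2 + c*x₁ + d = 0)
    (e2 : x₂^4 + a*x₂^3 + b*x₂^2 + c*x₂ + d = 0)
    (e3 : x₃^4 + a*x₃^3 + b*x₃^2 + c*x₃ + d = 0)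
    (e4 : x₄^4 + a*x₄^3 + b*x₄^2 + c*x₄ + d = 0)
    (e5 : x₅^4 + a*x₅^3 + b*x₅^2 + c*x₅ + d = 0) : False := by
  set P : ℝ[X] := X^4 + C a * X^3 + C b * X^2 + C c * X + C d with hP
  have hdeg : P.natDegree = 4 := by
    rw [hP]; compute_degree!
  have hP0 : P ≠ 0 := by
    intro h; rw [h] at hdeg; simp at hdeg
  have hroot : ∀ y : ℝ, y^4 + a*y^3 + b*y^2 + c*y + d = 0 → y ∈ P.roots.toFinset := by
    intro y hy
    rw [Multiset.mem_toFinset, Polynomial.mem_roots hP0]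
    simp only [hP, Polynomial.IsRoot, Polynomial.eval_add, Polynomial.eval_mul,
      Polynomial.eval_pow, Polynomial.eval_C, Polynomial.eval_X]
    linear_combination hy
  have hsub : ({x₁, x₂, x₃, x₄, x₅} : Finset ℝ) ⊆ P.roots.toFinset := by
    intro y hy
    simp only [Finset.mem_insert, Finset.mem_singleton] at hy
    rcases hy with h|h|h|h|h <;> subst h <;>
      [exact hroot _ e1; exact hroot _ e2; exact hroot _ e3; exact hroot _ e4; exact hroot _ e5]
  have hcard : ({x₁, x₂, x₃, x₄, x₅} : Finset ℝ).card = 5 := by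
    rw [Finset.card_insert_of_notMem (by simp [h12, h13, h14, h15]),
        Finset.card_insert_of_notMem (by simp [h23, h24, h25]),
        Finset.card_insert_of_notMem (by simp [h34, h35]),
        Finset.card_insert_of_notMem (by simp [h45]),
        Finset.card_singleton]
  have h5 : 5 ≤ P.roots.toFinset.card := hcard ▸ Finset.card_le_card hsub
  have h6 : P.roots.toFinset.card ≤ Multiset.card P.roots := Multiset.toFinset_card_le _
  have h7 : Multiset.card P.roots ≤ 4 := hdeg ▸ Polynomial.card_roots' P
  omega

lemma cauchy_bound (a b c d x : ℝ) (hx : 1 + |a| + |b| + |c| + |d| ≤ |x|) :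
    0 < x^4 + a*x^3 + b*x^2 + c*x + d := by
  have h1 : (1:ℝ) ≤ |x| := by
    have := abs_nonneg a; have := abs_nonneg b; have := abs_nonneg c; have := abs_nonneg d
    linarith
  have h3 : (0:ℝ) < |x|^3 := by positivity
  have hx4 : x^4 = |x|^4 := by
    rw [← abs_pow, abs_of_nonneg (by positivity)]
  have ha : -(|a| * |x|^3) ≤ a * x^3 := by
    have : |a * x^3| = |a| * |x|^3 := by rw [abs_mul, abs_pow]
    linarith [neg_abs_le (a * x^3), this.ge, this.le]
  have hb : -(|b| * |x|^2) ≤ b * x^2 := by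
    have : |b * x^2| = |b| * |x|^2 := by rw [abs_mul, abs_pow]
    linarith [neg_abs_le (b * x^2)]
  have hc : -(|c| * |x|) ≤ c * x := by
    have : |c * x| = |c| * |x| := abs_mul c x
    linarith [neg_abs_le (c * x)]
  have hd : -|d| ≤ d := neg_abs_le d
  have h23 : |x|^2 ≤ |x|^3 := by nlinarith [abs_nonneg x]
  have h13 : |x| ≤ |x|^3 := by nlinarith [abs_nonneg x]
  have h03 : (1:ℝ) ≤ |x|^3 := by nlinarith [abs_nonneg x]
  have key : (|a| + |b| + |c| + |d|) * |x|^3 ≤ (|x| - 1) * |x|^3 :=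
    mul_le_mul_of_nonneg_right (by linarith) h3.le
  have hb' : -(|b| * |x|^3) ≤ b * x^2 := by nlinarith [abs_nonneg b]
  have hc' : -(|c| * |x|^3) ≤ c * x := by nlinarith [abs_nonneg c]
  have hd' : -(|d| * |x|^3) ≤ d := by nlinarith [abs_nonneg d]
  have hx44 : |x|^4 = |x| * |x|^3 := by ring
  nlinarith [ha, hb', hc', hd', key]

lemma quartic_four_intervals (a b c d : ℝ) (f : ℝ → ℝ)
    (hf : ∀ x, f x = x^4 + a*x^3 + b*x^2 + c*x + d)
    (h0 : f 0 < 0) (hhalf : f (-(1/2)) < 0) (h1 : 0 < f (-1)) (h2 : f (-2) < 0) :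
    (∃! x : ℝ, x ∈ Set.Ioi (0 : ℝ) ∧ f x = 0) ∧
    (∃! x : ℝ, x ∈ Set.Ioo (-1 : ℝ) (-1 / 2) ∧ f x = 0) ∧
    (∃! x : ℝ, x ∈ Set.Ioo (-2 : ℝ) (-1) ∧ f x = 0) ∧
    (∃! x : ℝ, x ∈ Set.Iio (-2 : ℝ) ∧ f x = 0) := by
  have hcont : Continuous f := by
    have : f = fun x => x^4 + a*x^3 + b*x^2 + c*x + d := funext hf
    rw [this]; fun_prop
  set M : ℝ := 3 + |a| + |b| + |c| + |d| with hM
  have hM3 : 3 ≤ M := by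
    have := abs_nonneg a; have := abs_nonneg b; have := abs_nonneg c; have := abs_nonneg d
    linarith
  have hfM : 0 < f M := by
    rw [hf]
    exact cauchy_bound a b c d M (by rw [abs_of_nonneg (show (0:ℝ) ≤ M by linarith)]; linarith)
  have hfnM : 0 < f (-M) := by
    rw [hf]
    exact cauchy_bound a b c d (-M) (by rw [abs_of_nonpos (show -M ≤ (0:ℝ) by linarith), neg_neg]; linarith)
  -- roots
  obtain ⟨r₁, hr₁, hfr₁⟩ := intermediate_value_Ioo (by linarith : (0:ℝ) ≤ M)
    hcont.continuousOn ⟨h0, hfM⟩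
  obtain ⟨r₂, hr₂, hfr₂⟩ := intermediate_value_Ioo' (by norm_num : (-1:ℝ) ≤ -(1/2))
    hcont.continuousOn ⟨hhalf, h1⟩
  obtain ⟨r₃, hr₃, hfr₃⟩ := intermediate_value_Ioo (by norm_num : (-2:ℝ) ≤ -1)
    hcont.continuousOn ⟨h2, h1⟩
  obtain ⟨r₄, hr₄, hfr₄⟩ := intermediate_value_Ioo' (by linarith : (-M:ℝ) ≤ -2)
    hcont.continuousOn ⟨h2, hfnM⟩
  obtain ⟨hr₁l, hr₁u⟩ := hr₁
  obtain ⟨hr₂l, hr₂u⟩ := hr₂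
  obtain ⟨hr₃l, hr₃u⟩ := hr₃
  obtain ⟨hr₄l, hr₄u⟩ := hr₄
  have key : ∀ x y : ℝ, f x = 0 → f y = 0 →
      ((0 < x ∧ 0 < y) ∨ (-1 < x ∧ x < -(1/2) ∧ -1 < y ∧ y < -(1/2)) ∨
       (-2 < x ∧ x < -1 ∧ -2 < y ∧ y < -1) ∨ (x < -2 ∧ y < -2)) → x = y := by
    intro x y hx hy hcase
    by_contra hne
    have ex : x^4 + a*x^3 + b*x^2 + c*x + d = 0 := by rw [← hf]; exact hx
    have ey : y^4 + a*y^3 + b*y^2 + c*y + d = 0 := by rw [← hf]; exact hy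
    have e1 : r₁^4 + a*r₁^3 + b*r₁^2 + c*r₁ + d = 0 := by rw [← hf]; exact hfr₁
    have e2 : r₂^4 + a*r₂^3 + b*r₂^2 + c*r₂ + d = 0 := by rw [← hf]; exact hfr₂
    have e3 : r₃^4 + a*r₃^3 + b*r₃^2 + c*r₃ + d = 0 := by rw [← hf]; exact hfr₃
    have e4 : r₄^4 + a*r₄^3 + b*r₄^2 + c*r₄ + d = 0 := by rw [← hf]; exact hfr₄
    rcases hcase with ⟨hx', hy'⟩ | ⟨hx1, hx2, hy1, hy2⟩ | ⟨hx1, hx2, hy1, hy2⟩ | ⟨hx', hy'⟩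
    · exact five_roots_aux a b c d x y r₂ r₃ r₄ hne (by linarith) (by linarith) (by linarith)
        (by linarith) (by linarith) (by linarith) (by linarith) (by linarith) (by linarith)
        ex ey e2 e3 e4
    · exact five_roots_aux a b c d x y r₁ r₃ r₄ hne (by linarith) (by linarith) (by linarith)
        (by linarith) (by linarith) (by linarith) (by linarith) (by linarith) (by linarith)
        ex ey e1 e3 e4
    · exact five_roots_aux a b c d x y r₁ r₂ r₄ hne (by linarith) (by linarith) (by linarith)
        (by linarith) (by linarith) (by linarith) (by linarith) (by linarith) (by linarith)
        ex ey e1 e2 e4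
    · exact five_roots_aux a b c d x y r₁ r₂ r₃ hne (by linarith) (by linarith) (by linarith)
        (by linarith) (by linarith) (by linarith) (by linarith) (by linarith) (by linarith)
        ex ey e1 e2 e3
  refine ⟨⟨r₁, ⟨hr₁l, hfr₁⟩, ?_⟩, ⟨r₂, ⟨⟨hr₂l, by linarith⟩, hfr₂⟩, ?_⟩,
    ⟨r₃, ⟨⟨hr₃l, hr₃u⟩, hfr₃⟩, ?_⟩, ⟨r₄, ⟨by simpa using hr₄u, hfr₄⟩, ?_⟩⟩
  · rintro y ⟨hy, hfy⟩
    exact key y r₁ hfy hfr₁ (Or.inl ⟨hy, hr₁l⟩)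
  · rintro y ⟨⟨hy1, hy2⟩, hfy⟩
    exact key y r₂ hfy hfr₂ (Or.inr (Or.inl ⟨hy1, by linarith, hr₂l, hr₂u⟩))
  · rintro y ⟨⟨hy1, hy2⟩, hfy⟩
    exact key y r₃ hfy hfr₃ (Or.inr (Or.inr (Or.inl ⟨hy1, hy2, hr₃l, hr₃u⟩)))
  · rintro y ⟨hy, hfy⟩
    exact key y r₄ hfy hfr₄ (Or.inr (Or.inr (Or.inr ⟨hy, hr₄u⟩)))

theorem stmt_4 (s t : ℤ) (hs : 2 ≤ s) (ht : 2 ≤ t) (f : ℝ → ℝ)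
    (hf : ∀ x : ℝ, f x = x ^ 4 + (-(s : ℝ) - t + 4) * x ^ 3
      + (2 * t + 2 * s - 8 * s * t + 4) * x ^ 2 + (6 * s + 6 * t - 14 * s * t) * x
      - 5 * s * t + 2 * s + 2 * t) :
    (∃! x : ℝ, x ∈ Set.Ioi (0 : ℝ) ∧ f x = 0) ∧
    (∃! x : ℝ, x ∈ Set.Ioo (-1 : ℝ) (-1 / 2) ∧ f x = 0) ∧
    (∃! x : ℝ, x ∈ Set.Ioo (-2 : ℝ) (-1) ∧ f x = 0) ∧
    (∃! x : ℝ, x ∈ Set.Iio (-2 : ℝ) ∧ f x = 0) := by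
  have hs' : (2:ℝ) ≤ (s:ℝ) := by exact_mod_cast hs
  have ht' : (2:ℝ) ≤ (t:ℝ) := by exact_mod_cast ht
  have hst1 : 2 * (s:ℝ) ≤ s * t := by nlinarith
  have hst2 : 2 * (t:ℝ) ≤ s * t := by nlinarith
  have hst4 : (4:ℝ) ≤ s * t := by nlinarith
  apply quartic_four_intervals (-(s:ℝ) - t + 4) (2*t + 2*s - 8*s*t + 4) (6*s + 6*t - 14*s*t)
    (-5*(s:ℝ)*t + 2*s + 2*t) f
  · intro x; rw [hf x]; ring
  · rw [hf]; norm_num; nlinarith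
  · rw [hf]; norm_num; nlinarith
  · rw [hf]; norm_num; nlinarith
  · rw [hf]; norm_num; nlinarith
end

section
/- Let $s,t$ be integers with $s \ge 2$, $t \ge 2$, and let $f(x)=x^{3}+(-s-t+4)x^{2}+(2+s+t-3st)x+s+t-2st$. Then $f$ has exactly one real root in each of the intervals $(0,+\infty)$, $(-1,-2/3)$, and $(-\infty,-1)$. -/
set_option maxHeartbeats 800000

/-- A real polynomial of natDegree 3 has at most 3 distinct roots. -/
lemma four_roots_absurd (p : Polynomial ℝ) (hdeg : p.natDegree = 3)
    (w x y z : ℝ) (hwx : w ≠ x) (hwy : w ≠ y) (hwz : w ≠ z)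
    (hxy : x ≠ y) (hxz : x ≠ z) (hyz : y ≠ z)
    (hw : p.eval w = 0) (hx : p.eval x = 0) (hy : p.eval y = 0)
    (hz : p.eval z = 0) : False := by
  have hp0 : p ≠ 0 := by
    intro h
    rw [h] at hdeg
    simp at hdeg
  have hsub : ({w, x, y, z} : Finset ℝ) ⊆ p.roots.toFinset := by
    intro r hr
    simp only [Finset.mem_insert, Finset.mem_singleton] at hr
    rw [Multiset.mem_toFinset, Polynomial.mem_roots hp0]
    rcases hr with rfl | rfl | rfl | rfl <;> simp [Polynomial.IsRoot, *]
  have h4 : ({w, x, y, z} : Finset ℝ).card = 4 := by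
    rw [Finset.card_insert_of_notMem (by simp [hwx, hwy, hwz]),
      Finset.card_insert_of_notMem (by simp [hxy, hxz]),
      Finset.card_insert_of_notMem (by simp [hyz]), Finset.card_singleton]
  have h1 := Finset.card_le_card hsub
  have h2 := p.roots.toFinset_card_le
  have h3 := p.card_roots' 
  omega

theorem stmt_6 (s t : ℤ) (hs : 2 ≤ s) (ht : 2 ≤ t) (f : ℝ → ℝ)
    (hf : ∀ x : ℝ, f x = x ^ 3 + (-(s : ℝ) - t + 4) * x ^ 2
      + (2 + s + t - 3 * s * t) * x + s + t - 2 * s * t) :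
    (∃! x : ℝ, x ∈ Set.Ioi (0 : ℝ) ∧ f x = 0) ∧
    (∃! x : ℝ, x ∈ Set.Ioo (-1 : ℝ) (-2 / 3) ∧ f x = 0) ∧
    (∃! x : ℝ, x ∈ Set.Iio (-1 : ℝ) ∧ f x = 0) := by
  have hs' : (2 : ℝ) ≤ s := by exact_mod_cast hs
  have ht' : (2 : ℝ) ≤ t := by exact_mod_cast ht
  set a : ℝ := -(s : ℝ) - t + 4 with ha
  set b : ℝ := 2 + (s : ℝ) + t - 3 * s * t with hb
  set c : ℝ := (s : ℝ) + t - 2 * s * t with hc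
  have hf' : ∀ x : ℝ, f x = x ^ 3 + a * x ^ 2 + b * x + c := by
    intro x; rw [hf x]; ring
  set p : Polynomial ℝ := Polynomial.X ^ 3 + Polynomial.C a * Polynomial.X ^ 2
    + Polynomial.C b * Polynomial.X + Polynomial.C c with hp
  have hpf : ∀ x, p.eval x = f x := by
    intro x; rw [hf' x]; simp [hp]
  have hdeg : p.natDegree = 3 := by
    rw [hp]; compute_degree!
  have hcont : Continuous f := by
    have : f = fun x => x ^ 3 + a * x ^ 2 + b * x + c := funext hf'
    rw [this]; fun_prop
  -- the big point
  set X : ℝ := (s : ℝ) + t + 3 * s * t + 2 with hX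
  have hst : (4 : ℝ) ≤ (s : ℝ) * t := by nlinarith
  have hX1 : (1 : ℝ) < X := by nlinarith
  have hX0 : (0 : ℝ) < X := by linarith
  have hXst : (s : ℝ) * t ≤ X := by nlinarith
  have h3st : 3 * (s : ℝ) * t < X := by nlinarith
  have hfX : 0 < f X := by
    rw [hf' X, ha, hb, hc]
    have key : X ^ 3 + (-(s:ℝ) - t + 4) * X ^ 2 + (2 + s + t - 3 * s * t) * X + ((s:ℝ) + t - 2 * s * t)
        = 3 * (s * t) * (X * (X - 1)) + 6 * X ^ 2 + (2 + s + t) * X + s + t - 2 * s * t := by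
      rw [hX]; ring
    rw [key]
    nlinarith [mul_pos (by nlinarith : (0:ℝ) < 3 * ((s:ℝ)*t)) (mul_pos hX0 (by linarith : (0:ℝ) < X - 1)), mul_pos hX0 hX0]
  have hfmX : f (-X) < 0 := by
    rw [hf' (-X), ha, hb, hc]
    have key : (-X) ^ 3 + (-(s:ℝ) - t + 4) * (-X) ^ 2 + (2 + s + t - 3 * s * t) * (-X) + ((s:ℝ) + t - 2 * s * t)
        = -(X * X * (X + s + t - 4)) + (3 * s * t - 2 - s - t) * X + s + t - 2 * s * t := by
      ring
    rw [key]
    have h1 : X * X * (X + (s:ℝ) + t - 4) ≥ X * X := by nlinarith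
    nlinarith [mul_pos hX0 hX0, mul_lt_mul_of_pos_right h3st hX0]
  have hf0 : f 0 < 0 := by rw [hf' 0, ha, hb, hc]; nlinarith
  have hfm1 : 0 < f (-1) := by rw [hf' (-1), ha, hb, hc]; nlinarith [mul_pos (by linarith : (0:ℝ) < (s:ℝ)-1) (by linarith : (0:ℝ) < (t:ℝ)-1)]
  have hfm23 : f (-2/3 : ℝ) < 0 := by rw [hf' (-2/3), ha, hb, hc]; nlinarith
  -- roots by IVT
  have hr3 : ∃ r ∈ Set.Ioo (0 : ℝ) X, f r = 0 := by
    have := intermediate_value_Ioo (le_of_lt (by linarith : (0:ℝ) < X)) hcont.continuousOn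
    have h0 : (0 : ℝ) ∈ Set.Ioo (f 0) (f X) := ⟨hf0, hfX⟩
    obtain ⟨r, hr, hfr⟩ := this h0
    exact ⟨r, hr, hfr⟩
  have hr2 : ∃ r ∈ Set.Ioo (-1 : ℝ) (-2/3 : ℝ), f r = 0 := by
    have := intermediate_value_Ioo' (by norm_num : (-1:ℝ) ≤ -2/3) hcont.continuousOn
    have h0 : (0 : ℝ) ∈ Set.Ioo (f (-2/3)) (f (-1)) := ⟨hfm23, hfm1⟩
    obtain ⟨r, hr, hfr⟩ := this h0
    exact ⟨r, hr, hfr⟩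
  have hr1 : ∃ r ∈ Set.Ioo (-X) (-1 : ℝ), f r = 0 := by
    have := intermediate_value_Ioo (by linarith : (-X : ℝ) ≤ -1) hcont.continuousOn
    have h0 : (0 : ℝ) ∈ Set.Ioo (f (-X)) (f (-1)) := ⟨hfmX, hfm1⟩
    obtain ⟨r, hr, hfr⟩ := this h0
    exact ⟨r, hr, hfr⟩
  obtain ⟨r1, hr1m, hr1f⟩ := hr1
  obtain ⟨r2, hr2m, hr2f⟩ := hr2
  obtain ⟨r3, hr3m, hr3f⟩ := hr3
  have pr1 : p.eval r1 = 0 := by rw [hpf]; exact hr1f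
  have pr2 : p.eval r2 = 0 := by rw [hpf]; exact hr2f
  have pr3 : p.eval r3 = 0 := by rw [hpf]; exact hr3f
  obtain ⟨hr1a, hr1b⟩ := hr1m
  obtain ⟨hr2a, hr2b⟩ := hr2m
  obtain ⟨hr3a, hr3b⟩ := hr3m
  have h23 : (-2/3 : ℝ) < 0 := by norm_num
  refine ⟨⟨r3, ⟨hr3a, hr3f⟩, ?_⟩, ⟨r2, ⟨⟨hr2a, hr2b⟩, hr2f⟩, ?_⟩, ⟨r1, ⟨hr1b, hr1f⟩, ?_⟩⟩
  · rintro y ⟨hy, hyf⟩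
    by_contra hne
    simp only [Set.mem_Ioi] at hy
    exact four_roots_absurd p hdeg r1 r2 y r3
      (by linarith) (by linarith) (by linarith)
      (by linarith) (by linarith) hne
      pr1 pr2 (by rw [hpf]; exact hyf) pr3
  · rintro y ⟨⟨hya, hyb⟩, hyf⟩
    by_contra hne
    exact four_roots_absurd p hdeg r1 y r2 r3
      (by linarith) (by linarith) (by linarith)
      hne (by linarith) (by linarith)
      pr1 (by rw [hpf]; exact hyf) pr2 pr3
  · rintro y ⟨hy, hyf⟩
    by_contra hne
    simp only [Set.mem_Iio] at hy
    exact four_roots_absurd p hdeg y r1 r2 r3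
      hne (by linarith) (by linarith)
      (by linarith) (by linarith) (by linarith)
      (by rw [hpf]; exact hyf) pr1 pr2 pr3
end
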